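/- Let T : ℝ₊₊^N → ℝ₊₊^N be an MSP mapping, let ‖·‖ be a monotone norm on ℝ^N, and let p_max > 0. Consider the epigraph problem: maximize γ over (γ, p) ∈ ℝ₊₊ × ℝ₊₊^N subject to p ≥ γ T(p) (coordinatewise) and ‖p‖ ≤ p_max. Then there exists an optimal solution (γ*, p*) of this problem that achieves equality in all constraints, i.e., p* = γ* T(p*) and ‖p*‖ = p_max. -/

import Mathlib

open MeasureTheory Filter

/-- The open positive cone in `ℝ^N`. -/
def PosCone (N : ℕ) : Set (Fin N → ℝ) := {x | ∀ i, 0 < x i}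

/-- A monotonic, scalable, and positive (MSP) function on the positive cone `ℝ₊₊^N`:
(0) it is positive on the cone, (i) monotone on the cone, (ii) scalable, and
(iii) its infimum over the cone is positive. -/
def IsMSPFun {N : ℕ} (f : (Fin N → ℝ) → ℝ) : Prop :=
  (∀ x : Fin N → ℝ, (∀ i, 0 < x i) → 0 < f x) ∧
  (∀ x y : Fin N → ℝ, (∀ i, 0 < x i) → (∀ i, 0 < y i) → x ≤ y → f x ≤ f y) ∧
  (∀ α : ℝ, 1 < α → ∀ x : Fin N → ℝ, (∀ i, 0 < x i) → f (α • x) < α * f x) ∧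
  0 < sInf (f '' PosCone N)

/-- An MSP mapping: every coordinate function is an MSP function. -/
def IsMSPMap {N : ℕ} (T : (Fin N → ℝ) → (Fin N → ℝ)) : Prop :=
  ∀ i, IsMSPFun (fun x => T x i)

/-- A monotone norm on `ℝ^N`: a genuine norm that is order-preserving on the
nonnegative cone. -/
def IsMonoNorm {N : ℕ} (nrm : (Fin N → ℝ) → ℝ) : Prop :=
  (∀ x : Fin N → ℝ, nrm x = 0 ↔ x = 0) ∧
  (∀ (a : ℝ) (x : Fin N → ℝ), nrm (a • x) = |a| * nrm x) ∧
  (∀ x y : Fin N → ℝ, nrm (x + y) ≤ nrm x + nrm y) ∧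
  (∀ x y : Fin N → ℝ, (∀ i, 0 ≤ x i) → (∀ i, 0 ≤ y i) → x ≤ y → nrm x ≤ nrm y)

/-!
Let `minRatio T p = minᵢ pᵢ / Tᵢ p`, the best level attainable at `p`, and let `c > 0` be the
coordinatewise infimum of `T`. Feasible points of level at least `γ₁ > 0` satisfy `p ≥ γ₁ c`, so
they lie in the compact set `{p ≥ γ₁ c, ‖p‖ ≤ pmax}` inside the open cone; there the continuous
function `minRatio T` attains its maximum `γ*` at some `p̄`. The monotone map `p ↦ γ* T p` sends
the order interval `[γ* c, p̄]` into itself, so by Knaster–Tarski it has a fixed point `p* ≤ p̄`,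
still optimal. If `‖p*‖ < pmax`, then `s = pmax / ‖p*‖ > 1` and scalability gives
`γ* T (s p*) < s γ* T p* = s p*` in every coordinate, so a level above `γ*` would be feasible.
-/

open Set Topology

theorem MonotoneOn.exists_fixedPt_mem_Icc {α : Type*} [ConditionallyCompleteLattice α]
    {f : α → α} {a b : α} (hab : a ≤ b) (hmaps : MapsTo f (Icc a b) (Icc a b))
    (hf : MonotoneOn f (Icc a b)) : ∃ x ∈ Icc a b, f x = x := by
  have : Fact (a ≤ b) := ⟨hab⟩
  let g : Icc a b →o Icc a b := ⟨hmaps.restrict, fun x y hxy => hf x.2 y.2 hxy⟩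
  exact ⟨g.lfp, g.lfp.2, congrArg Subtype.val g.map_lfp⟩

section

variable {N : ℕ}

theorem isOpen_posCone : IsOpen (PosCone N) := by
  simp only [PosCone, ofPred_forall]
  exact isOpen_iInter_of_finite fun i => isOpen_lt continuous_const (continuous_apply i)

namespace IsMonoNorm

variable {nrm : (Fin N → ℝ) → ℝ}

def toSeminorm (h : IsMonoNorm nrm) : Seminorm ℝ (Fin N → ℝ) :=
  Seminorm.of nrm h.2.2.1 fun a x => by rw [h.2.1, Real.norm_eq_abs]

theorem nonneg (h : IsMonoNorm nrm) (x : Fin N → ℝ) : 0 ≤ nrm x :=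
  apply_nonneg h.toSeminorm x

theorem pos_of_ne_zero (h : IsMonoNorm nrm) {x : Fin N → ℝ} (hx : x ≠ 0) : 0 < nrm x :=
  (h.nonneg x).lt_of_ne fun h0 => hx ((h.1 x).1 h0.symm)

theorem continuous (h : IsMonoNorm nrm) : Continuous nrm :=
  h.toSeminorm.convexOn.locallyLipschitz.continuous

theorem map_div_self_smul (h : IsMonoNorm nrm) {x : Fin N → ℝ} (hx : x ≠ 0) {r : ℝ}
    (hr : 0 ≤ r) : nrm ((r / nrm x) • x) = r := by
  rw [h.2.1, abs_of_nonneg (div_nonneg hr (h.nonneg x)),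
    div_mul_cancel₀ r (h.pos_of_ne_zero hx).ne']

theorem apply_mul_le (h : IsMonoNorm nrm) {p : Fin N → ℝ} (hp : ∀ i, 0 ≤ p i) (i : Fin N) :
    p i * nrm (Pi.single i 1) ≤ nrm p := by
  have hsingle : Pi.single i (p i) = p i • (Pi.single i 1 : Fin N → ℝ) := by
    rw [← Pi.single_smul, smul_eq_mul, mul_one]
  have hle : Pi.single i (p i) ≤ p := fun j => by
    rcases eq_or_ne j i with rfl | hj <;> simp [*]
  have h0 : ∀ j, 0 ≤ (Pi.single i (p i) : Fin N → ℝ) j := fun j => by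
    rcases eq_or_ne j i with rfl | hj <;> simp [*]
  have := h.2.2.2 _ p h0 hp hle
  rwa [hsingle, h.2.1, abs_of_nonneg (hp i)] at this

theorem isCompact_setOf_le_and_le (h : IsMonoNorm nrm) {lo : Fin N → ℝ} (hlo : ∀ i, 0 ≤ lo i)
    (r : ℝ) : IsCompact {p | lo ≤ p ∧ nrm p ≤ r} := by
  refine (isCompact_Icc (b := fun i => r / nrm (Pi.single i 1))).of_isClosed_subset
    ((isClosed_le continuous_const continuous_id).inter
      (isClosed_le h.continuous continuous_const)) fun p ⟨hlop, hpr⟩ => ⟨hlop, fun i => ?_⟩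
  rw [le_div_iff₀ (h.pos_of_ne_zero (Pi.single_ne_zero_iff.2 one_ne_zero))]
  exact (h.apply_mul_le (fun j => (hlo j).trans (hlop j)) i).trans hpr

end IsMonoNorm

namespace IsMSPFun

variable {f : (Fin N → ℝ) → ℝ}

theorem lt_mul_of_le_smul (hf : IsMSPFun f) {α : ℝ} (hα : 1 < α) {x y : Fin N → ℝ}
    (hx : x ∈ PosCone N) (hy : y ∈ PosCone N) (hxy : x ≤ α • y) : f x < α * f y :=
  (hf.2.1 x (α • y) hx (fun i => mul_pos (by linarith) (hy i)) hxy).trans_lt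
    (hf.2.2.1 α hα y hy)

theorem continuousOn (hf : IsMSPFun f) : ContinuousOn f (PosCone N) := by
  intro x hx
  have hfx : 0 < f x := hf.1 x hx
  have hpos : ∀ᶠ y in 𝓝 x, y ∈ PosCone N := isOpen_posCone.mem_nhds hx
  refine ContinuousAt.continuousWithinAt (tendsto_order.2 ⟨fun b hb => ?_, fun b hb => ?_⟩)
  · rcases le_or_gt b 0 with hb0 | hb0
    · exact hpos.mono fun y hy => hb0.trans_lt (hf.1 y hy)
    have hα : 1 < f x / b := (one_lt_div hb0).2 hb
    have hnear : ∀ᶠ y in 𝓝 x, ∀ i, x i < f x / b * y i := eventually_all.2 fun i =>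
      continuousAt_const.eventually_lt
        (continuousAt_const.mul (continuous_apply i).continuousAt) (lt_mul_left (hx i) hα)
    filter_upwards [hpos, hnear] with y hy hxy
    have := hf.lt_mul_of_le_smul hα hx hy fun i => (hxy i).le
    rwa [div_mul_eq_mul_div, lt_div_iff₀ hb0, mul_lt_mul_iff_right₀ hfx] at this
  · have hα : 1 < b / f x := (one_lt_div hfx).2 hb
    have hnear : ∀ᶠ y in 𝓝 x, ∀ i, y i < b / f x * x i := eventually_all.2 fun i =>
      (continuous_apply i).continuousAt.eventually_lt continuousAt_const (lt_mul_left (hx i) hα)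
    filter_upwards [hpos, hnear] with y hy hyx
    have := hf.lt_mul_of_le_smul hα hy hx fun i => (hyx i).le
    rwa [div_mul_cancel₀ _ hfx.ne'] at this

end IsMSPFun

namespace IsMSPMap

variable {T : (Fin N → ℝ) → (Fin N → ℝ)}

theorem continuousOn (hT : IsMSPMap T) : ContinuousOn T (PosCone N) :=
  continuousOn_pi.2 fun i => (hT i).continuousOn

theorem monotoneOn (hT : IsMSPMap T) : MonotoneOn T (PosCone N) :=
  fun x hx y hy hxy i => (hT i).2.1 x y hx hy hxy

theorem exists_pos_le (hT : IsMSPMap T) :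
    ∃ c : Fin N → ℝ, (∀ i, 0 < c i) ∧ ∀ p ∈ PosCone N, c ≤ T p := by
  refine ⟨fun i => sInf ((fun x => T x i) '' PosCone N), fun i => (hT i).2.2.2, fun p hp i => ?_⟩
  refine csInf_le ⟨0, ?_⟩ ⟨p, hp, rfl⟩
  rintro _ ⟨x, hx, rfl⟩
  exact ((hT i).1 x hx).le

theorem exists_fixedPt_le (hT : IsMSPMap T) {γ : ℝ} (hγ : 0 < γ) {p : Fin N → ℝ}
    (hp : p ∈ PosCone N) (hle : ∀ i, γ * T p i ≤ p i) :
    ∃ q ∈ PosCone N, q ≤ p ∧ ∀ i, q i = γ * T q i := by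
  obtain ⟨c, hc, hcT⟩ := hT.exists_pos_le
  have hIcc : Icc (γ • c) p ⊆ PosCone N := fun q hq i => (mul_pos hγ (hc i)).trans_le (hq.1 i)
  have hlow : ∀ q ∈ PosCone N, γ • c ≤ γ • T q := fun q hq =>
    smul_le_smul_of_nonneg_left (hcT q hq) hγ.le
  have hmono : MonotoneOn (fun q => γ • T q) (Icc (γ • c) p) := fun x hx y hy hxy =>
    smul_le_smul_of_nonneg_left (hT.monotoneOn (hIcc hx) (hIcc hy) hxy) hγ.le
  have hcp : γ • c ≤ p := (hlow p hp).trans hle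
  obtain ⟨q, hq, hfix⟩ := hmono.exists_fixedPt_mem_Icc hcp fun q hq =>
    ⟨hlow q (hIcc hq), (hmono hq ⟨hcp, le_rfl⟩ hq.2).trans hle⟩
  exact ⟨q, hIcc hq, hq.2, fun i => (congrFun hfix i).symm⟩

end IsMSPMap

variable {T : (Fin N → ℝ) → (Fin N → ℝ)} {nrm : (Fin N → ℝ) → ℝ} {pmax : ℝ}

variable (T nrm pmax) in
def IsFeasible (γ : ℝ) (p : Fin N → ℝ) : Prop :=
  0 < γ ∧ p ∈ PosCone N ∧ (∀ i, γ * T p i ≤ p i) ∧ nrm p ≤ pmax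

theorem IsFeasible.smul_le {c : Fin N → ℝ} (hc : ∀ p ∈ PosCone N, c ≤ T p) {γ : ℝ}
    {p : Fin N → ℝ} (h : IsFeasible T nrm pmax γ p) : γ • c ≤ p :=
  fun i => (mul_le_mul_of_nonneg_left (hc p h.2.1 i) h.1.le).trans (h.2.2.1 i)

section MinRatio

variable [NeZero N]

noncomputable def minRatio (T : (Fin N → ℝ) → (Fin N → ℝ)) (p : Fin N → ℝ) : ℝ :=
  Finset.univ.inf' Finset.univ_nonempty fun i => p i / T p i

theorem le_minRatio_iff {p : Fin N → ℝ} (hT : ∀ i, 0 < T p i) {γ : ℝ} :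
    γ ≤ minRatio T p ↔ ∀ i, γ * T p i ≤ p i := by
  simp only [minRatio, Finset.le_inf'_iff, Finset.mem_univ, true_imp_iff, le_div_iff₀ (hT _)]

theorem lt_minRatio_of_forall_lt {p : Fin N → ℝ} (hT : ∀ i, 0 < T p i) {γ : ℝ}
    (h : ∀ i, γ * T p i < p i) : γ < minRatio T p := by
  simpa only [minRatio, Finset.lt_inf'_iff, Finset.mem_univ, true_imp_iff, lt_div_iff₀ (hT _)]

theorem IsMSPMap.continuousOn_minRatio (hT : IsMSPMap T) :
    ContinuousOn (minRatio T) (PosCone N) :=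
  ContinuousOn.finset_inf'_apply _ fun i _ =>
    (continuousOn_apply i _).div ((continuous_apply i).comp_continuousOn hT.continuousOn)
      fun p hp => ((hT i).1 p hp).ne'

theorem IsMSPMap.isFeasible_minRatio (hT : IsMSPMap T) {p : Fin N → ℝ} (hp : p ∈ PosCone N)
    (hnp : nrm p ≤ pmax) : IsFeasible T nrm pmax (minRatio T p) p := by
  have hTp : ∀ i, 0 < T p i := fun i => (hT i).1 p hp
  refine ⟨lt_minRatio_of_forall_lt hTp fun i => ?_, hp, (le_minRatio_iff hTp).1 le_rfl, hnp⟩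
  simpa using hp i

theorem IsFeasible.le_minRatio (hT : IsMSPMap T) {γ : ℝ} {p : Fin N → ℝ}
    (h : IsFeasible T nrm pmax γ p) : γ ≤ minRatio T p :=
  (le_minRatio_iff fun i => (hT i).1 p h.2.1).2 h.2.2.1

theorem IsMSPMap.lt_minRatio_smul (hT : IsMSPMap T) {γ : ℝ} (hγ : 0 < γ)
    {q : Fin N → ℝ} (hq : q ∈ PosCone N) (hfix : ∀ i, q i = γ * T q i) {s : ℝ} (hs : 1 < s) :
    γ < minRatio T (s • q) := by
  have hsq : s • q ∈ PosCone N := fun i => mul_pos (by linarith) (hq i)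
  refine lt_minRatio_of_forall_lt (fun i => (hT i).1 _ hsq) fun i => ?_
  calc γ * T (s • q) i < γ * (s * T q i) := mul_lt_mul_of_pos_left ((hT i).2.2.1 s hs q hq) hγ
    _ = (s • q) i := by rw [Pi.smul_apply, smul_eq_mul, hfix i]; ring

theorem exists_isFeasible_forall_le (hT : IsMSPMap T) (hnrm : IsMonoNorm nrm)
    (hpmax : 0 < pmax) :
    ∃ γs p, IsFeasible T nrm pmax γs p ∧ ∀ γ p, IsFeasible T nrm pmax γ p → γ ≤ γs := by
  obtain ⟨c, hc, hcT⟩ := hT.exists_pos_le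
  set p₁ : Fin N → ℝ := (pmax / nrm 1) • 1
  have hp₁ : p₁ ∈ PosCone N := fun i =>
    mul_pos (div_pos hpmax (hnrm.pos_of_ne_zero one_ne_zero)) one_pos
  have hfeas₁ := hT.isFeasible_minRatio hp₁ (hnrm.map_div_self_smul one_ne_zero hpmax.le).le
  set γ₁ := minRatio T p₁
  set K := {p | γ₁ • c ≤ p ∧ nrm p ≤ pmax}
  have hKpos : K ⊆ PosCone N := fun p hp i => (mul_pos hfeas₁.1 (hc i)).trans_le (hp.1 i)
  have hmemK : ∀ γ p, IsFeasible T nrm pmax γ p → γ₁ ≤ γ → p ∈ K := fun γ p h hγ =>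
    ⟨(smul_le_smul_of_nonneg_right hγ fun i => (hc i).le).trans (h.smul_le hcT), h.2.2.2⟩
  obtain ⟨p, hpK, hmax⟩ := (hnrm.isCompact_setOf_le_and_le
    (fun i => (mul_pos hfeas₁.1 (hc i)).le) pmax).exists_isMaxOn
    ⟨p₁, hmemK _ _ hfeas₁ le_rfl⟩ (hT.continuousOn_minRatio.mono hKpos)
  refine ⟨minRatio T p, p, hT.isFeasible_minRatio (hKpos hpK) hpK.2, fun γ q hq => ?_⟩
  rcases le_total γ γ₁ with hγ | hγ
  · exact hγ.trans (hmax (hmemK _ _ hfeas₁ le_rfl))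
  · exact (hq.le_minRatio hT).trans (hmax (hmemK γ q hq hγ))

end MinRatio

end

/-- The epigraph-form max-min problem admits an optimal solution with all constraints
active: there is a feasible pair `(γ*, p*)` with `p* = γ* • T(p*)`, `‖p*‖ = p_max`,
and `γ ≤ γ*` for every feasible pair `(γ, p)`. -/
theorem stmt12 {N : ℕ} (hN : 0 < N)
    (T : (Fin N → ℝ) → (Fin N → ℝ)) (hT : IsMSPMap T)
    (nrm : (Fin N → ℝ) → ℝ) (hnrm : IsMonoNorm nrm)
    (pmax : ℝ) (hpmax : 0 < pmax) :
    ∃ (γs : ℝ) (ps : Fin N → ℝ),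
      0 < γs ∧ (∀ i, 0 < ps i) ∧
      (∀ i, ps i = γs * T ps i) ∧ nrm ps = pmax ∧
      ∀ (γ : ℝ) (p : Fin N → ℝ), 0 < γ → (∀ i, 0 < p i) →
        (∀ i, γ * T p i ≤ p i) → nrm p ≤ pmax → γ ≤ γs := by
  have : NeZero N := ⟨hN.ne'⟩
  obtain ⟨γs, p, ⟨hγs, hp, hle, hnp⟩, hopt⟩ := exists_isFeasible_forall_le hT hnrm hpmax
  obtain ⟨q, hq, hqp, hfix⟩ := hT.exists_fixedPt_le hγs hp hle
  have hnq : nrm q ≤ pmax :=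
    (hnrm.2.2.2 q p (fun i => (hq i).le) (fun i => (hp i).le) hqp).trans hnp
  have hq0 : q ≠ 0 := fun h => (hq 0).ne' (congrFun h 0)
  refine ⟨γs, q, hγs, hq, hfix, hnq.antisymm (not_lt.1 fun hlt => ?_),
    fun γ p' hγ hp' hle' hnp' => hopt γ p' ⟨hγ, hp', hle', hnp'⟩⟩
  have hs : 1 < pmax / nrm q := (one_lt_div (hnrm.pos_of_ne_zero hq0)).2 hlt
  have hsq : (pmax / nrm q) • q ∈ PosCone N := fun i => mul_pos (by linarith) (hq i)
  exact (hT.lt_minRatio_smul hγs hq hfix hs).not_ge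
    (hopt _ _ (hT.isFeasible_minRatio hsq (hnrm.map_div_self_smul hq0 hpmax.le).le))
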